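/- arXiv:2509.11126 — 3 statements merged into one kernel-verified Lean document; each statement's English description precedes it below -/
import Mathlib

section
/- Let a_1,…,a_m ∈ ℝ^r with ∑_i a_i = 0, let δ ∈ ℝ^m, and define b_0 = (1/m)·1_mᵀδ - (1/(2m²))·(1_mᵀ D 1_m) and b = (1/2)·J_m·(δ_0 - δ), where D_{ij} = ‖a_i - a_j‖² and δ_0 = (1/m)·D·1_m. Then for every x ∈ ℝ^r, (1/m)·∑_{i=1}^m (‖x - a_i‖² - δ_i)² = (‖x‖² - b_0)² + (4/m)·∑_{i=1}^m (⟨a_i, x⟩ - b_i)². -/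
/-!
Write `nᵢ = ‖aᵢ‖²` and `Q = ∑ nᵢ`. Since `∑ aᵢ = 0`, the row sums of `D` are `∑ⱼ Dᵢⱼ = m nᵢ + Q`,
so `δ₀ᵢ = nᵢ + Q/m`, `b₀ = (∑ δᵢ - Q)/m` and `2 bᵢ = nᵢ - δᵢ + b₀`. Hence every residual
`‖x - aᵢ‖² - δᵢ` equals `(‖x‖² - b₀) - 2 (⟪aᵢ, x⟫ - bᵢ)`, and on expanding the squares the cross
term vanishes: `∑ ⟪aᵢ, x⟫ = 0` by centring and `∑ bᵢ = 0` because `1ᵀ J = 0`.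
-/

open Matrix Finset

section

variable {ι κ R : Type*} [Fintype ι] [Fintype κ] [CommRing R]

lemma one_sub_smul_ones_mulVec [DecidableEq ι] (c : R) (v : ι → R) :
    ((1 : Matrix ι ι R) - c • Matrix.of fun _ _ => (1 : R)) *ᵥ v =
      fun i => v i - c * ∑ j, v j := by
  ext i
  rw [sub_mulVec, one_mulVec, smul_mulVec]
  simp [mulVec, dotProduct, mul_sum]

lemma sum_one_sub_smul_ones_mulVec [DecidableEq ι] {c : R} (hc : Fintype.card ι * c = 1)
    (v : ι → R) :
    ∑ i, (((1 : Matrix ι ι R) - c • Matrix.of fun _ _ => (1 : R)) *ᵥ v) i = 0 := by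
  simp only [one_sub_smul_ones_mulVec, sum_sub_distrib, sum_const, card_univ, nsmul_eq_mul,
    ← mul_assoc, hc, one_mul, sub_self]

lemma sum_sq_sub_two_mul_of_sum_eq_zero (u : R) (v : ι → R) (hv : ∑ i, v i = 0) :
    ∑ i, (u - 2 * v i) ^ 2 = Fintype.card ι * u ^ 2 + 4 * ∑ i, v i ^ 2 := by
  have hexp : ∀ i, (u - 2 * v i) ^ 2 = u ^ 2 - 4 * u * v i + 4 * v i ^ 2 := fun i => by ring
  simp only [hexp, sum_add_distrib, sum_sub_distrib, ← mul_sum, hv, sum_const, card_univ,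
    nsmul_eq_mul]
  ring

lemma sum_dotProduct_sub_self_of_sum_eq_zero (a : ι → κ → R) (ha : ∑ j, a j = 0) (i : ι) :
    ∑ j, (a i - a j) ⬝ᵥ (a i - a j) = Fintype.card ι * (a i ⬝ᵥ a i) + ∑ j, a j ⬝ᵥ a j := by
  have hexp : ∀ j, (a i - a j) ⬝ᵥ (a i - a j) = a i ⬝ᵥ a i - 2 * (a i ⬝ᵥ a j) + a j ⬝ᵥ a j :=
    fun j => by simp only [sub_dotProduct, dotProduct_sub, dotProduct_comm (a j) (a i)]; ring
  have hcross : ∑ j, a i ⬝ᵥ a j = 0 := by rw [← dotProduct_sum, ha, dotProduct_zero]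
  simp only [hexp, sum_add_distrib, sum_sub_distrib, ← mul_sum, hcross, sum_const, card_univ,
    nsmul_eq_mul]
  ring

theorem sum_sq_dotProduct_sub_self_sub_eq (a : ι → κ → R) (ha : ∑ i, a i = 0) (δ b : ι → R)
    (b₀ : R) (hb : ∑ i, b i = 0) (hab : ∀ i, 2 * b i = a i ⬝ᵥ a i - δ i + b₀) (x : κ → R) :
    ∑ i, ((x - a i) ⬝ᵥ (x - a i) - δ i) ^ 2 =
      Fintype.card ι * (x ⬝ᵥ x - b₀) ^ 2 + 4 * ∑ i, (a i ⬝ᵥ x - b i) ^ 2 := by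
  have hres : ∀ i, (x - a i) ⬝ᵥ (x - a i) - δ i = (x ⬝ᵥ x - b₀) - 2 * (a i ⬝ᵥ x - b i) :=
    fun i => by
      rw [sub_dotProduct, dotProduct_sub, dotProduct_sub, dotProduct_comm x (a i)]
      linear_combination -hab i
  have hsum : ∑ i, (a i ⬝ᵥ x - b i) = 0 := by
    rw [sum_sub_distrib, ← sum_dotProduct, ha, zero_dotProduct, hb, sub_zero]
  simp only [hres]
  exact sum_sq_sub_two_mul_of_sum_eq_zero _ _ hsum

end

theorem ls_as_weighted_tlmds (r m : ℕ) (hm : 1 ≤ m)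
    (a : Fin m → Fin r → ℝ)
    (hcenter : ∑ i, a i = 0)
    (δ : Fin m → ℝ)
    (D : Fin m → Fin m → ℝ)
    (hD : ∀ i j, D i j = ∑ k, (a i k - a j k) ^ 2)
    (δ₀ : Fin m → ℝ)
    (hδ₀ : ∀ i, δ₀ i = (1 / (m : ℝ)) * ∑ j, D i j)
    (b₀ : ℝ)
    (hb₀ : b₀ = (1 / (m : ℝ)) * (∑ i, δ i) -
      (1 / (2 * (m : ℝ) ^ 2)) * (∑ i, ∑ j, D i j))
    (J : Matrix (Fin m) (Fin m) ℝ)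
    (hJ : J = (1 : Matrix (Fin m) (Fin m) ℝ) -
      ((m : ℝ)⁻¹) • (Matrix.of fun _ _ => (1 : ℝ)))
    (b : Fin m → ℝ)
    (hb : b = (1 / 2 : ℝ) • J.mulVec (δ₀ - δ)) :
    ∀ x : Fin r → ℝ,
      (1 / (m : ℝ)) * ∑ i, ((∑ k, (x k - a i k) ^ 2) - δ i) ^ 2 =
      ((∑ k, (x k) ^ 2) - b₀) ^ 2 +
        (4 / (m : ℝ)) * ∑ i, ((∑ k, a i k * x k) - b i) ^ 2 := by
  intro x
  have hm₀ : (m : ℝ) ≠ 0 := Nat.cast_ne_zero.mpr (by omega)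
  set Q := ∑ j, a j ⬝ᵥ a j
  have hrow : ∀ i, ∑ j, D i j = m * (a i ⬝ᵥ a i) + Q := fun i => by
    have hDij : ∀ j, D i j = (a i - a j) ⬝ᵥ (a i - a j) := fun j => by
      simp only [hD, dotProduct, Pi.sub_apply, sq]
    simp only [hDij, sum_dotProduct_sub_self_of_sum_eq_zero a hcenter i, Fintype.card_fin, Q]
  have hδ₀' : ∀ i, δ₀ i = a i ⬝ᵥ a i + Q / m := fun i => by
    rw [hδ₀, hrow]; field_simp
  have hb₀' : b₀ = (∑ i, δ i) / m - Q / m := by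
    simp only [hb₀, hrow, sum_add_distrib, ← mul_sum, sum_const, card_univ, Fintype.card_fin,
      nsmul_eq_mul]
    field_simp; ring
  have hbi : ∀ i, 2 * b i = a i ⬝ᵥ a i - δ i + b₀ := fun i => by
    simp only [hb, hJ, one_sub_smul_ones_mulVec, Pi.smul_apply, Pi.sub_apply, sum_sub_distrib,
      hδ₀', sum_add_distrib, sum_const, card_univ, Fintype.card_fin, nsmul_eq_mul, hb₀',
      smul_eq_mul]
    field_simp; ring
  have hb_sum : ∑ i, b i = 0 := by
    rw [hb, hJ]
    simp only [Pi.smul_apply, smul_eq_mul, ← mul_sum]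
    rw [sum_one_sub_smul_ones_mulVec (by simp [hm₀]), mul_zero]
  have key := sum_sq_dotProduct_sub_self_sub_eq a hcenter δ b b₀ hb_sum hbi x
  simp only [dotProduct, Pi.sub_apply, ← sq, Fintype.card_fin] at key
  rw [key]
  field_simp
end

section
/- Let A ∈ ℝ^{r×m} with A·Aᵀ = Λ = diag(λ_1,…,λ_r), λ_1 ≥ ⋯ ≥ λ_r > 0, let b ∈ ℝ^m, b_0 ∈ ℝ, and w > 0. A point x* ∈ ℝ^r is a global minimizer of f(x) = (1/2)(‖x‖² - b_0)² + w·∑_{i=1}^m (⟨a_i,x⟩ - b_i)² if and only if there exists λ* ∈ ℝ such that (Λ + (λ*/(2w))I_r)x* = A·b, λ* ≥ -2wλ_r, and ‖x*‖² = b_0 + λ*/2. -/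
open Matrix Finset

lemma quartic_lin_coeff (a b c d : ℝ)
    (h : ∀ t : ℝ, 0 ≤ a * t ^ 4 + b * t ^ 3 + c * t ^ 2 + d * t) : d = 0 := by
  have hcont : Filter.Tendsto (fun t : ℝ => a * t ^ 3 + b * t ^ 2 + c * t + d)
      (nhds 0) (nhds d) := by
    have : Continuous (fun t : ℝ => a * t ^ 3 + b * t ^ 2 + c * t + d) := by continuity
    simpa using this.tendsto 0
  have h1 : 0 ≤ d := by
    refine ge_of_tendsto (hcont.mono_left (nhdsWithin_le_nhds (s := Set.Ioi 0)))
      (Filter.eventually_of_mem self_mem_nhdsWithin fun t ht => ?_)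
    have ht' : (0:ℝ) < t := ht
    have := h t
    nlinarith
  have h2 : d ≤ 0 := by
    refine le_of_tendsto (hcont.mono_left (nhdsWithin_le_nhds (s := Set.Iio 0)))
      (Filter.eventually_of_mem self_mem_nhdsWithin fun t ht => ?_)
    have ht' : t < (0:ℝ) := ht
    have := h t
    nlinarith
  linarith

theorem weighted_tlmds_global_iff_kkt (r m : ℕ)
    (A : Matrix (Fin r) (Fin m) ℝ)
    (lam : Fin r → ℝ)
    (hAA : A * Aᵀ = Matrix.diagonal lam)
    (hpos : ∀ i, 0 < lam i)
    (lamr : ℝ) (hmin : ∀ i, lamr ≤ lam i) (hmem : ∃ i, lam i = lamr)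
    (b : Fin m → ℝ) (b₀ : ℝ) (w : ℝ) (hw : 0 < w)
    (f : (Fin r → ℝ) → ℝ)
    (hf : ∀ x, f x = (1 / 2 : ℝ) * ((∑ k, (x k) ^ 2) - b₀) ^ 2 +
      w * ∑ i, ((∑ k, A k i * x k) - b i) ^ 2)
    (xstar : Fin r → ℝ) :
    (∀ x, f xstar ≤ f x) ↔
      ∃ lamstar : ℝ,
        (∀ k, (lam k + lamstar / (2 * w)) * xstar k = A.mulVec b k) ∧
        lamstar ≥ -(2 * w * lamr) ∧
        (∑ k, (xstar k) ^ 2) = b₀ + lamstar / 2 := by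
  classical
  have hw' : w ≠ 0 := ne_of_gt hw
  set c : Fin r → ℝ := fun k => ∑ i, A k i * b i with hc
  have hcdef : ∀ k, A.mulVec b k = c k := by
    intro k; simp [Matrix.mulVec, dotProduct, hc]
  have hdiag : ∀ k l, (∑ i, A k i * A l i) = (if k = l then lam k else 0) := by
    intro k l
    have h := congrFun (congrFun hAA k) l
    simpa [Matrix.mul_apply, Matrix.transpose_apply, Matrix.diagonal_apply] using h
  -- quadratic form expansion
  have hquad : ∀ x : Fin r → ℝ,
      (∑ i, (∑ k, A k i * x k) ^ 2) = ∑ k, lam k * (x k) ^ 2 := by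
    intro x
    have step1 : ∀ i : Fin m, (∑ k, A k i * x k) ^ 2
        = ∑ k, ∑ l, x k * x l * (A k i * A l i) := by
      intro i; rw [sq, Finset.sum_mul_sum]
      exact Finset.sum_congr rfl fun k _ => Finset.sum_congr rfl fun l _ => by ring
    calc (∑ i, (∑ k, A k i * x k) ^ 2)
        = ∑ i, ∑ k, ∑ l, x k * x l * (A k i * A l i) := Finset.sum_congr rfl fun i _ => step1 i
      _ = ∑ k, ∑ i, ∑ l, x k * x l * (A k i * A l i) := Finset.sum_comm
      _ = ∑ k, ∑ l, ∑ i, x k * x l * (A k i * A l i) :=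
          Finset.sum_congr rfl fun k _ => Finset.sum_comm
      _ = ∑ k, ∑ l, x k * x l * (∑ i, A k i * A l i) := by
          refine Finset.sum_congr rfl fun k _ => Finset.sum_congr rfl fun l _ => ?_
          rw [Finset.mul_sum]
      _ = ∑ k, lam k * (x k) ^ 2 := by
          refine Finset.sum_congr rfl fun k _ => ?_
          simp only [hdiag, mul_ite, mul_zero]
          rw [Finset.sum_ite_eq]
          simp; ring
  have hcross : ∀ x : Fin r → ℝ,
      (∑ i, (∑ k, A k i * x k) * b i) = ∑ k, c k * x k := by
    intro x
    calc (∑ i, (∑ k, A k i * x k) * b i)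
        = ∑ i, ∑ k, A k i * b i * x k := by
          refine Finset.sum_congr rfl fun i _ => ?_
          rw [Finset.sum_mul]
          exact Finset.sum_congr rfl fun k _ => by ring
      _ = ∑ k, ∑ i, A k i * b i * x k := Finset.sum_comm
      _ = ∑ k, c k * x k := by
          refine Finset.sum_congr rfl fun k _ => ?_
          rw [hc, Finset.sum_mul]
  -- expansion of f
  have hexp : ∀ x : Fin r → ℝ, f x = (1/2) * ((∑ k, (x k) ^ 2) - b₀) ^ 2
      + w * (∑ k, lam k * (x k) ^ 2) - 2 * w * (∑ k, c k * x k) + w * (∑ i, (b i) ^ 2) := by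
    intro x
    rw [hf x]
    have hsplit : (∑ i, ((∑ k, A k i * x k) - b i) ^ 2)
        = (∑ i, (∑ k, A k i * x k) ^ 2) - 2 * (∑ i, (∑ k, A k i * x k) * b i)
          + ∑ i, (b i) ^ 2 := by
      calc (∑ i, ((∑ k, A k i * x k) - b i) ^ 2)
          = ∑ i, ((∑ k, A k i * x k) ^ 2 - 2 * ((∑ k, A k i * x k) * b i) + (b i) ^ 2) :=
            Finset.sum_congr rfl fun i _ => by ring
        _ = (∑ i, (∑ k, A k i * x k) ^ 2) - 2 * (∑ i, (∑ k, A k i * x k) * b i)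
            + ∑ i, (b i) ^ 2 := by
            rw [Finset.sum_add_distrib, Finset.sum_sub_distrib, Finset.mul_sum]
    rw [hsplit, hquad, hcross]
    ring
  -- update-sum helper
  have hupd : ∀ (k : Fin r) (v : ℝ) (ψ : Fin r → ℝ → ℝ),
      (∑ j, ψ j (Function.update xstar k v j))
        = (∑ j, ψ j (xstar j)) + (ψ k v - ψ k (xstar k)) := by
    intro k v ψ
    have h1 : (∑ j, ψ j (Function.update xstar k v j))
        = (∑ j ∈ Finset.univ.erase k, ψ j (xstar j)) + ψ k v := by
      rw [← Finset.sum_erase_add Finset.univ _ (Finset.mem_univ k)]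
      congr 1
      · exact Finset.sum_congr rfl fun j hj => by
          rw [Function.update_of_ne (Finset.ne_of_mem_erase hj)]
      · rw [Function.update_self]
    have h2 : (∑ j, ψ j (xstar j))
        = (∑ j ∈ Finset.univ.erase k, ψ j (xstar j)) + ψ k (xstar k) :=
      (Finset.sum_erase_add Finset.univ _ (Finset.mem_univ k)).symm
    rw [h1, h2]
    ring
  -- main identity
  have hmain : ∀ μ : ℝ, (∀ k, (lam k + μ) * xstar k = c k) →
      (∑ k, (xstar k) ^ 2) = b₀ + w * μ →
      ∀ x : Fin r → ℝ, f x - f xstar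
        = (1/2) * ((∑ k, (x k) ^ 2) - (∑ k, (xstar k) ^ 2)) ^ 2
          + w * ∑ k, (lam k + μ) * (x k - xstar k) ^ 2 := by
    intro μ h1 hS x
    have key : (∑ k, (lam k * (x k) ^ 2 - lam k * (xstar k) ^ 2
          - 2 * (c k * x k) + 2 * (c k * xstar k)))
        = ∑ k, ((lam k + μ) * (x k - xstar k) ^ 2 + μ * (xstar k) ^ 2 - μ * (x k) ^ 2) := by
      refine Finset.sum_congr rfl fun k _ => ?_
      rw [← h1 k]; ring
    have key1 : (∑ k, lam k * (x k) ^ 2) - (∑ k, lam k * (xstar k) ^ 2)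
          - 2 * (∑ k, c k * x k) + 2 * (∑ k, c k * xstar k)
        = (∑ k, (lam k + μ) * (x k - xstar k) ^ 2)
          + μ * (∑ k, (xstar k) ^ 2) - μ * (∑ k, (x k) ^ 2) := by
      have l1 := key
      rw [Finset.sum_sub_distrib, Finset.sum_add_distrib, Finset.sum_sub_distrib,
        Finset.sum_sub_distrib, Finset.sum_add_distrib] at l1
      rw [← Finset.mul_sum, ← Finset.mul_sum, ← Finset.mul_sum, ← Finset.mul_sum] at l1
      linarith
    rw [hexp x, hexp xstar]
    linear_combination w * key1 + ((∑ k, (x k) ^ 2) - (∑ k, (xstar k) ^ 2)) * hS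
  constructor
  · -- necessity
    intro hglob
    -- first-order conditions
    have hfo : ∀ k, 2 * ((∑ j, (xstar j) ^ 2) - b₀) * xstar k
        + 2 * w * lam k * xstar k - 2 * w * c k = 0 := by
      intro k
      have hg : ∀ t : ℝ, f (Function.update xstar k (xstar k + t)) = f xstar +
          ((1/2) * t ^ 4 + (2 * xstar k) * t ^ 3
            + (((∑ j, (xstar j) ^ 2) - b₀) + 2 * (xstar k) ^ 2 + w * lam k) * t ^ 2
            + (2 * ((∑ j, (xstar j) ^ 2) - b₀) * xstar k
              + 2 * w * lam k * xstar k - 2 * w * c k) * t) := by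
        intro t
        have e1 : (∑ j, (Function.update xstar k (xstar k + t) j) ^ 2)
            = (∑ j, (xstar j) ^ 2) + ((xstar k + t) ^ 2 - (xstar k) ^ 2) :=
          hupd k (xstar k + t) (fun _ v => v ^ 2)
        have e2 : (∑ j, lam j * (Function.update xstar k (xstar k + t) j) ^ 2)
            = (∑ j, lam j * (xstar j) ^ 2) + (lam k * (xstar k + t) ^ 2 - lam k * (xstar k) ^ 2) :=
          hupd k (xstar k + t) (fun j v => lam j * v ^ 2)
        have e3 : (∑ j, c j * (Function.update xstar k (xstar k + t) j))
            = (∑ j, c j * xstar j) + (c k * (xstar k + t) - c k * xstar k) :=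
          hupd k (xstar k + t) (fun j v => c j * v)
        rw [hexp, hexp, e1, e2, e3]
        ring
      apply quartic_lin_coeff (1/2) (2 * xstar k)
        (((∑ j, (xstar j) ^ 2) - b₀) + 2 * (xstar k) ^ 2 + w * lam k)
      intro t
      have h := hglob (Function.update xstar k (xstar k + t))
      rw [hg t] at h
      linarith
    set P : ℝ := ∑ j, (xstar j) ^ 2 with hP
    refine ⟨2 * (P - b₀), ?_, ?_, by ring⟩
    · intro k
      rw [hcdef k]
      have h := hfo k
      field_simp
      ring_nf
      ring_nf at h
      nlinarith [hfo k]
    · -- second-order condition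
      have hc1 : ∀ k, (lam k + (2 * (P - b₀)) / (2 * w)) * xstar k = c k := by
        intro k
        have h := hfo k
        field_simp
        nlinarith [hfo k]
      have hc3 : P = b₀ + w * ((2 * (P - b₀)) / (2 * w)) := by
        field_simp
        ring
      by_contra hcon
      push_neg at hcon
      obtain ⟨i, hi⟩ := hmem
      set μ : ℝ := (2 * (P - b₀)) / (2 * w) with hμ
      have hneg : lam i + μ < 0 := by
        have : μ < -lamr := by
          rw [hμ]
          rw [div_lt_iff₀ (by linarith : (0:ℝ) < 2 * w)]
          nlinarith
        linarith [hi ▸ le_refl (lam i)]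
      by_cases hx : xstar i = 0
      · -- perturb in direction i
        set t : ℝ := Real.sqrt (-(w * (lam i + μ))) with ht
        have ht2 : t ^ 2 = -(w * (lam i + μ)) := by
          rw [ht, sq, Real.mul_self_sqrt]; nlinarith
        have htpos : 0 < t ^ 2 := by rw [ht2]; nlinarith
        have hd := hmain μ hc1 hc3 (Function.update xstar i (xstar i + t))
        have e1 : (∑ j, (Function.update xstar i (xstar i + t) j) ^ 2)
            = P + ((xstar i + t) ^ 2 - (xstar i) ^ 2) :=
          hupd i (xstar i + t) (fun _ v => v ^ 2)
        have e2 : (∑ j, (lam j + μ) * (Function.update xstar i (xstar i + t) j - xstar j) ^ 2)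
            = (∑ j, (lam j + μ) * (xstar j - xstar j) ^ 2)
              + ((lam i + μ) * (xstar i + t - xstar i) ^ 2 - (lam i + μ) * (xstar i - xstar i) ^ 2) :=
          hupd i (xstar i + t) (fun j v => (lam j + μ) * (v - xstar j) ^ 2)
        have e20 : (∑ j, (lam j + μ) * (xstar j - xstar j) ^ 2) = 0 := by simp
        rw [e1, e2, e20] at hd
        have h := hglob (Function.update xstar i (xstar i + t))
        have hs : w * (lam i + μ) < 0 := mul_neg_of_pos_of_neg hw hneg
        have hd2 : f (Function.update xstar i (xstar i + t)) - f xstar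
            = -(w * (lam i + μ)) ^ 2 / 2 := by
          linear_combination hd + (1/2) * (t ^ 2 + w * (lam i + μ)) * ht2
            + (2 * t ^ 3 + 2 * xstar i * t ^ 2) * hx
        have hs2 : 0 < (w * (lam i + μ)) ^ 2 := by nlinarith [hs]
        linarith [h, hd2, hs2]
      · -- flip sign of coordinate i
        have hd := hmain μ hc1 hc3 (Function.update xstar i (-xstar i))
        have e1 : (∑ j, (Function.update xstar i (-xstar i) j) ^ 2)
            = P + ((-xstar i) ^ 2 - (xstar i) ^ 2) :=
          hupd i (-xstar i) (fun _ v => v ^ 2)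
        have e2 : (∑ j, (lam j + μ) * (Function.update xstar i (-xstar i) j - xstar j) ^ 2)
            = (∑ j, (lam j + μ) * (xstar j - xstar j) ^ 2)
              + ((lam i + μ) * (-xstar i - xstar i) ^ 2 - (lam i + μ) * (xstar i - xstar i) ^ 2) :=
          hupd i (-xstar i) (fun j v => (lam j + μ) * (v - xstar j) ^ 2)
        have e20 : (∑ j, (lam j + μ) * (xstar j - xstar j) ^ 2) = 0 := by simp
        rw [e1, e2, e20] at hd
        have h := hglob (Function.update xstar i (-xstar i))
        have hx2 : 0 < (xstar i) ^ 2 := by positivity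
        have hd2 : f (Function.update xstar i (-xstar i)) - f xstar
            = 4 * ((lam i + μ) * (w * (xstar i) ^ 2)) := by
          rw [hd]; ring
        linarith [h, hd2, mul_neg_of_neg_of_pos hneg (mul_pos hw hx2)]
  · -- sufficiency
    rintro ⟨ls, h1, h2, h3⟩
    intro x
    have hc1 : ∀ k, (lam k + ls / (2 * w)) * xstar k = c k := by
      intro k; rw [← hcdef k]; exact h1 k
    have hc3 : (∑ k, (xstar k) ^ 2) = b₀ + w * (ls / (2 * w)) := by
      rw [h3]; field_simp
    have hd := hmain (ls / (2 * w)) hc1 hc3 x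
    have hnn : 0 ≤ ∑ k, (lam k + ls / (2 * w)) * (x k - xstar k) ^ 2 := by
      refine Finset.sum_nonneg fun k _ => ?_
      have hk : 0 ≤ lam k + ls / (2 * w) := by
        have : -lamr ≤ ls / (2 * w) := by
          rw [le_div_iff₀ (by linarith : (0:ℝ) < 2 * w)]
          nlinarith
        have := hmin k
        linarith
      positivity
    linarith [hd, sq_nonneg ((∑ k, (x k) ^ 2) - (∑ k, (xstar k) ^ 2)),
      mul_nonneg hw.le hnn]
end

section
/- In the hard case λ* = -2wλ_r of the weighted T-LMDS trust region problem: let λ_1 ≥ ⋯ ≥ λ_k > λ_r be the eigenvalues strictly greater than λ_r, ĉ = A·b, and suppose ĉ_j = 0 for all j with λ_j = λ_r, y* := b_0 - wλ_r > 0, and y* ≥ ‖(Λ_k - λ_r I_k)^{-1}ĉ_{[1:k]}‖². Then the vector x* with x*_{[1:k]} = (Λ_k - λ_r I_k)^{-1}ĉ_{[1:k]}, x*_{k+1} = √(y* - ‖x*_{[1:k]}‖²), and remaining components zero, satisfies the KKT conditions: (Λ + (λ*/(2w))I_r)x* = ĉ, λ* ≥ -2wλ_r, and ‖x*‖² = b_0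 + λ*/2, hence is a global minimizer. -/
open Matrix Finset

theorem hard_case_kkt_global (r m k : ℕ) (hk : k < r)
    (A : Matrix (Fin r) (Fin m) ℝ)
    (lam : Fin r → ℝ)
    (hAA : A * Aᵀ = Matrix.diagonal lam)
    (hsorted : ∀ i j : Fin r, i ≤ j → lam j ≤ lam i)
    (lamr : ℝ) (hlamr : 0 < lamr)
    (hsmall : ∀ j : Fin r, k ≤ (j : ℕ) → lam j = lamr)
    (hbig : ∀ j : Fin r, (j : ℕ) < k → lamr < lam j)
    (b : Fin m → ℝ) (b₀ : ℝ) (w : ℝ) (hw : 0 < w)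
    (c : Fin r → ℝ) (hc : c = A.mulVec b)
    (hcz : ∀ j : Fin r, lam j = lamr → c j = 0)
    (ystar : ℝ) (hystar : ystar = b₀ - w * lamr) (hypos : 0 < ystar)
    (hyge : ystar ≥ ∑ j ∈ Finset.univ.filter (fun j : Fin r => (j : ℕ) < k),
      (c j / (lam j - lamr)) ^ 2)
    (lamstar : ℝ) (hlamstar : lamstar = -(2 * w * lamr))
    (xstar : Fin r → ℝ)
    (hx : ∀ j : Fin r, xstar j =
      if (j : ℕ) < k then c j / (lam j - lamr)
      else if (j : ℕ) = k then
        Real.sqrt (ystar -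
          ∑ j' ∈ Finset.univ.filter (fun j' : Fin r => (j' : ℕ) < k),
            (c j' / (lam j' - lamr)) ^ 2)
      else 0)
    (f : (Fin r → ℝ) → ℝ)
    (hf : ∀ x, f x = (1 / 2 : ℝ) * ((∑ i, (x i) ^ 2) - b₀) ^ 2 +
      w * ∑ i, ((∑ j, A j i * x j) - b i) ^ 2) :
    (∀ j, (lam j + lamstar / (2 * w)) * xstar j = c j) ∧
    lamstar ≥ -(2 * w * lamr) ∧
    (∑ j, (xstar j) ^ 2) = b₀ + lamstar / 2 ∧
    (∀ x, f xstar ≤ f x) := by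
  have hw0 : w ≠ 0 := ne_of_gt hw
  -- key identity: c j = (lam j - lamr) * xstar j for all j
  have key : ∀ j, (lam j - lamr) * xstar j = c j := by
    intro j
    by_cases hj : (j : ℕ) < k
    · have hne : lam j - lamr ≠ 0 := by
        have := hbig j hj; linarith
      rw [hx j, if_pos hj]
      field_simp
    · have hl : lam j = lamr := hsmall j (le_of_not_gt hj)
      have hcj : c j = 0 := hcz j hl
      rw [hcj, hl]; ring
  -- lam j ≥ lamr for all j
  have hlge : ∀ j, lamr ≤ lam j := by
    intro j
    by_cases hj : (j : ℕ) < k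
    · exact le_of_lt (hbig j hj)
    · exact le_of_eq (hsmall j (le_of_not_gt hj)).symm
  set D : ℝ := ystar - ∑ j' ∈ Finset.univ.filter (fun j' : Fin r => (j' : ℕ) < k),
      (c j' / (lam j' - lamr)) ^ 2 with hD
  have hDnn : 0 ≤ D := by simp only [hD]; linarith [hyge]
  -- sum of squares of xstar
  have hSstar : (∑ j, (xstar j) ^ 2) = ystar := by
    have hsplit : ∀ j : Fin r, (xstar j) ^ 2 =
        (if (j : ℕ) < k then (c j / (lam j - lamr)) ^ 2 else 0) +
        (if j = (⟨k, hk⟩ : Fin r) then D else 0) := by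
      intro j
      rw [hx j]
      by_cases hj : (j : ℕ) < k
      · have : j ≠ (⟨k, hk⟩ : Fin r) := by
          intro h; rw [h] at hj; simp at hj
        simp [hj, this]
      · by_cases hj2 : (j : ℕ) = k
        · have : j = (⟨k, hk⟩ : Fin r) := Fin.ext hj2
          simp [hj, hj2, this, Real.sq_sqrt hDnn]
        · have : j ≠ (⟨k, hk⟩ : Fin r) := by
            intro h; rw [h] at hj2; simp at hj2
          simp [hj, hj2, this]
    rw [Finset.sum_congr rfl (fun j _ => hsplit j), Finset.sum_add_distrib]
    rw [Finset.sum_ite_eq' Finset.univ (⟨k, hk⟩ : Fin r) (fun _ => D)]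
    rw [← Finset.sum_filter]
    simp [hD]
  -- quadratic form expansion
  have hAA' : ∀ j j' : Fin r, (∑ i, A j i * A j' i) = if j = j' then lam j else 0 := by
    intro j j'
    have := congrFun (congrFun hAA j) j'
    rw [Matrix.mul_apply] at this
    simp only [Matrix.transpose_apply] at this
    rw [this, Matrix.diagonal]
    simp [Matrix.of_apply]
  have h2 : ∀ x : Fin r → ℝ, ∑ i, (∑ j, A j i * x j) ^ 2 = ∑ j, lam j * (x j) ^ 2 := by
    intro x
    have : ∀ i : Fin m, (∑ j, A j i * x j) ^ 2 =
        ∑ j, ∑ j', (A j i * x j) * (A j' i * x j') := by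
      intro i
      rw [sq, Finset.sum_mul_sum]
    rw [Finset.sum_congr rfl (fun i _ => this i), Finset.sum_comm]
    have : ∀ j : Fin r, ∑ i, ∑ j', (A j i * x j) * (A j' i * x j') =
        ∑ j', (x j * x j') * ∑ i, A j i * A j' i := by
      intro j
      rw [Finset.sum_comm]
      refine Finset.sum_congr rfl (fun j' _ => ?_)
      rw [Finset.mul_sum]
      refine Finset.sum_congr rfl (fun i _ => ?_)
      ring
    rw [Finset.sum_congr rfl (fun j _ => this j)]
    refine Finset.sum_congr rfl (fun j _ => ?_)
    rw [Finset.sum_congr rfl (fun j' _ => by rw [hAA' j j'])]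
    rw [Finset.sum_eq_single j (fun j' _ hne => by simp [Ne.symm hne]) (by simp)]
    simp; ring
  have h3 : ∀ x : Fin r → ℝ, ∑ i, b i * (∑ j, A j i * x j) = ∑ j, c j * x j := by
    intro x
    have : ∀ i : Fin m, b i * (∑ j, A j i * x j) = ∑ j, A j i * b i * x j := by
      intro i; rw [Finset.mul_sum]; exact Finset.sum_congr rfl (fun j _ => by ring)
    rw [Finset.sum_congr rfl (fun i _ => this i), Finset.sum_comm]
    refine Finset.sum_congr rfl (fun j _ => ?_)
    have hcj : c j = ∑ i, A j i * b i := by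
      rw [hc]; rfl
    rw [hcj, Finset.sum_mul]
  have hQ : ∀ x : Fin r → ℝ, f x = (1 / 2 : ℝ) * ((∑ i, (x i) ^ 2) - b₀) ^ 2 +
      w * (∑ j, lam j * (x j) ^ 2) - 2 * w * (∑ j, c j * x j) + w * ∑ i, (b i) ^ 2 := by
    intro x
    rw [hf x]
    have : ∀ i : Fin m, ((∑ j, A j i * x j) - b i) ^ 2 =
        (∑ j, A j i * x j) ^ 2 - 2 * (b i * (∑ j, A j i * x j)) + (b i) ^ 2 := by
      intro i; ring
    rw [Finset.sum_congr rfl (fun i _ => this i), Finset.sum_add_distrib,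
      Finset.sum_sub_distrib, ← Finset.mul_sum, h2 x, h3 x]
    ring
  -- the V identity
  have hV : ∀ x : Fin r → ℝ, ∑ j, (lam j - lamr) * (x j - xstar j) ^ 2 =
      (∑ j, lam j * (x j) ^ 2) - lamr * (∑ j, (x j) ^ 2)
        - 2 * (∑ j, c j * x j) + (∑ j, c j * xstar j) := by
    intro x
    have hterm : ∀ j : Fin r, (lam j - lamr) * (x j - xstar j) ^ 2 =
        lam j * (x j) ^ 2 - lamr * (x j) ^ 2 - 2 * (c j * x j) + c j * xstar j := by
      intro j
      rw [← key j]
      ring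
    rw [Finset.sum_congr rfl (fun j _ => hterm j), Finset.sum_add_distrib,
      Finset.sum_sub_distrib, Finset.sum_sub_distrib, ← Finset.mul_sum, ← Finset.mul_sum]
  have hTstar : (∑ j, lam j * (xstar j) ^ 2) = (∑ j, c j * xstar j) + lamr * ystar := by
    have := hV xstar
    simp only [sub_self] at this
    have hz : ∑ j : Fin r, (lam j - lamr) * (0 : ℝ) ^ 2 = 0 := by simp
    rw [hSstar] at this
    -- this : ∑ j, (lam j - lamr) * (xstar j - xstar j)^2 = T* - lamr*ystar - 2U* + U*
    rw [hz] at this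
    linarith
  refine ⟨?_, ?_, ?_, ?_⟩
  · intro j
    have : lamstar / (2 * w) = -lamr := by
      rw [hlamstar]; field_simp
    rw [this]
    have := key j
    linarith [key j, mul_comm (lam j - lamr) (xstar j)]
  · rw [hlamstar]
  · rw [hSstar, hlamstar, hystar]; ring
  · intro x
    have hfd : f x = f xstar + (1 / 2 : ℝ) * ((∑ i, (x i) ^ 2) - ystar) ^ 2 +
        w * ∑ j, (lam j - lamr) * (x j - xstar j) ^ 2 := by
      rw [hQ x, hQ xstar, hSstar, hV x, hTstar, hystar]
      ring
    have h1 : 0 ≤ (1 / 2 : ℝ) * ((∑ i, (x i) ^ 2) - ystar) ^ 2 := by positivity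
    have h2' : 0 ≤ ∑ j, (lam j - lamr) * (x j - xstar j) ^ 2 := by
      refine Finset.sum_nonneg (fun j _ => ?_)
      exact mul_nonneg (by linarith [hlge j]) (sq_nonneg _)
    nlinarith [mul_nonneg (le_of_lt hw) h2']
end
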